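/- arXiv:1302.0276 — 2 statements merged into one kernel-verified Lean document; each statement's English description precedes it below -/
import Mathlib

section
/- If v : ℝ^N → ℝ is measurable with |v(x)| ≤ C/(1+|x|)^ν for some C > 0 and ν ≥ 0, and 0 < 2s < N, then there exists C' > 0 such that for all x ∈ ℝ^N, |∫_{ℝ^N} (1+|y|²)^{−2s} |x−y|^{−(N−2s)} v(y) dy| ≤ C'/(1+|x|)^{min(ν+2s, N−2s)}, provided ν + 2s ≠ N − 2s (to avoid a logarithmic correction, assume min(ν+2s, N−2s) is attained strictly). -/
open MeasureTheory

/-! Bounding `(1+|y|²)^{-2s}` by `2^{2s}(1+|y|)^{-4s}` reduces the claim to the estimate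
`∫ (1+|y|)^{-a} |x-y|^{-b} dy ≲ (1+|x|)^{-min(a+b-N, b)}` for `0 ≤ b < N < a+b`, `a ≠ N`,
applied with `a = ν+4s` and `b = N-2s`. With `u = 1+|x|`, split the integral over three regions:
* `|y-x| < u/2`: there `1+|y| ≥ u/2`, and the singularity `|x-y|^{-b}` integrates to `≲ u^{N-b}`;
* `|y| < 2u`, `|y-x| ≥ u/2`: there `|x-y|^{-b} ≤ (u/2)^{-b}`, and
  `∫_{|y|<2u} (1+|y|)^{-a} ≲ u^{max(N-a,0)}`;
* `|y| ≥ 2u`: there `|x-y| ≥ |y|/2`, and the tail `∫_{|y|≥2u} |y|^{-a-b}` is `≲ u^{N-a-b}`.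
Each power law comes from the homogeneity of `|z|^c` under the dilation `z ↦ u z`, and the
three exponents are all `≤ -min(a+b-N, b)`. -/

open Metric Set Module
open scoped NNReal ENNReal Pointwise

theorem mul_rpow_le_rpow_mul {c u p q : ℝ} (hc : 0 ≤ c) (hu : 1 ≤ u) (hpq : p ≤ q) :
    (c * u) ^ p ≤ c ^ p * u ^ q := by
  rw [Real.mul_rpow hc (by linarith)]
  exact mul_le_mul_of_nonneg_left (Real.rpow_le_rpow_of_exponent_le hu hpq) (by positivity)

theorem lintegral_le_setLIntegral_add_diff_add_compl {α : Type*} [MeasurableSpace α]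
    {μ : Measure α} (f : α → ℝ≥0∞) (s t : Set α) :
    ∫⁻ y, f y ∂μ ≤ ∫⁻ y in s, f y ∂μ + ∫⁻ y in t \ s, f y ∂μ + ∫⁻ y in tᶜ, f y ∂μ := by
  rw [← setLIntegral_univ]
  refine (lintegral_mono_set fun y _ ↦ ?_).trans
    ((lintegral_union_le _ _ _).trans (add_le_add_left (lintegral_union_le _ _ _) _))
  by_cases hy : y ∈ t <;> by_cases hy' : y ∈ s <;> simp [hy, hy']

section

variable {E : Type*} [NormedAddCommGroup E]

theorem abs_one_add_norm_sq_rpow_mul_mul_le {s ν C β w : ℝ} (hs : 0 < s) (x y : E)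
    (hw : |w| ≤ C / (1 + ‖y‖) ^ ν) :
    |(1 + ‖y‖ ^ 2) ^ (-(2 * s)) * ‖x - y‖ ^ (-β) * w| ≤
      2 ^ (2 * s) * C * ((1 + ‖y‖) ^ (-(ν + 4 * s)) * ‖x - y‖ ^ (-β)) := by
  have hk := rpow_neg_one_add_norm_sq_le (E := ℝ) ‖y‖ (r := 4 * s) (by linarith)
  rw [norm_norm, show -(4 * s) / 2 = -(2 * s) by ring, show 4 * s / 2 = 2 * s by ring] at hk
  rw [div_eq_mul_inv, ← Real.rpow_neg (by positivity)] at hw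
  rw [abs_mul, abs_mul, abs_of_nonneg (by positivity), abs_of_nonneg (by positivity)]
  calc _ ≤ 2 ^ (2 * s) * (1 + ‖y‖) ^ (-(4 * s)) * ‖x - y‖ ^ (-β) * (C * (1 + ‖y‖) ^ (-ν)) := by
        gcongr
    _ = _ := by rw [neg_add, Real.rpow_add (by positivity)]; ring

variable [MeasurableSpace E] [OpensMeasurableSpace E] (μ : Measure E)

theorem setLIntegral_ball_diff_ball_le {a b : ℝ} (x : E) (hb : 0 ≤ b) {R : ℝ} (hR : 0 < R) (T : ℝ) :
    ∫⁻ y in ball 0 T \ ball x R, ENNReal.ofReal ((1 + ‖y‖) ^ (-a) * ‖x - y‖ ^ (-b)) ∂μ ≤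
      ENNReal.ofReal (R ^ (-b)) *
        ∫⁻ y in ball (0 : E) T, ENNReal.ofReal ((1 + ‖y‖) ^ (-a)) ∂μ := by
  have hpt : ∀ y ∈ ball 0 T \ ball x R, ENNReal.ofReal ((1 + ‖y‖) ^ (-a) * ‖x - y‖ ^ (-b)) ≤
      ENNReal.ofReal (R ^ (-b)) * ENNReal.ofReal ((1 + ‖y‖) ^ (-a)) := by
    rintro y ⟨-, hy⟩
    rw [← ENNReal.ofReal_mul (by positivity), mul_comm]
    refine ENNReal.ofReal_le_ofReal (mul_le_mul_of_nonneg_right ?_ (by positivity))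
    rw [mem_ball_iff_norm, not_lt] at hy
    exact Real.rpow_le_rpow_of_nonpos hR (by rwa [norm_sub_rev]) (by linarith)
  calc _ ≤ ∫⁻ y in ball 0 T \ ball x R,
          ENNReal.ofReal (R ^ (-b)) * ENNReal.ofReal ((1 + ‖y‖) ^ (-a)) ∂μ :=
        setLIntegral_mono' (measurableSet_ball.diff measurableSet_ball) hpt
    _ ≤ _ := by
        rw [lintegral_const_mul' _ _ ENNReal.ofReal_ne_top]
        gcongr
        exact sdiff_subset

end

section

variable {E : Type*} [NormedAddCommGroup E] [NormedSpace ℝ E] [FiniteDimensional ℝ E]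
  [MeasurableSpace E] [BorelSpace E] (μ : Measure E) [μ.IsAddHaarMeasure]

theorem setLIntegral_smul_set_norm_rpow (c : ℝ) {R : ℝ} (hR : 0 < R) (s : Set E) :
    ∫⁻ z in R • s, ENNReal.ofReal (‖z‖ ^ c) ∂μ =
      ENNReal.ofReal (R ^ (finrank ℝ E + c)) * ∫⁻ z in s, ENNReal.ofReal (‖z‖ ^ c) ∂μ := by
  have hemb : MeasurableEmbedding (fun w : E ↦ R • w) :=
    (Homeomorph.smulOfNeZero R hR.ne').measurableEmbedding
  have hmap := Measure.map_addHaar_smul μ hR.ne'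
  rw [abs_of_pos (by positivity)] at hmap
  have hpre : (fun w : E ↦ R • w) ⁻¹' (R • s) = s := by
    rw [preimage_smul₀ hR.ne', inv_smul_smul₀ hR.ne']
  calc ∫⁻ z in R • s, ENNReal.ofReal (‖z‖ ^ c) ∂μ
      = ENNReal.ofReal (R ^ finrank ℝ E) *
          ∫⁻ z in R • s, ENNReal.ofReal (‖z‖ ^ c) ∂(μ.map fun w ↦ R • w) := by
        rw [hmap, Measure.restrict_smul, lintegral_smul_measure, smul_eq_mul, ← mul_assoc,
          ← ENNReal.ofReal_mul (by positivity), mul_inv_cancel₀ (by positivity),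
          ENNReal.ofReal_one, one_mul]
    _ = ENNReal.ofReal (R ^ finrank ℝ E) *
          ∫⁻ w in s, ENNReal.ofReal (R ^ c) * ENNReal.ofReal (‖w‖ ^ c) ∂μ := by
        rw [hemb.restrict_map, hemb.lintegral_map, hpre]
        congr 1
        refine lintegral_congr fun w ↦ ?_
        rw [← ENNReal.ofReal_mul (by positivity), norm_smul, Real.norm_of_nonneg hR.le,
          Real.mul_rpow hR.le (norm_nonneg w)]
    _ = ENNReal.ofReal (R ^ (finrank ℝ E + c)) * ∫⁻ z in s, ENNReal.ofReal (‖z‖ ^ c) ∂μ := by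
        rw [lintegral_const_mul' _ _ ENNReal.ofReal_ne_top, ← mul_assoc,
          ← ENNReal.ofReal_mul (by positivity), Real.rpow_add hR, Real.rpow_natCast]

theorem setLIntegral_ball_norm_rpow (c : ℝ) {R : ℝ} (hR : 0 < R) :
    ∫⁻ z in ball (0 : E) R, ENNReal.ofReal (‖z‖ ^ c) ∂μ =
      ENNReal.ofReal (R ^ (finrank ℝ E + c)) * ∫⁻ z in ball 0 1, ENNReal.ofReal (‖z‖ ^ c) ∂μ := by
  rw [← setLIntegral_smul_set_norm_rpow μ c hR, smul_unitBall_of_pos hR]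

theorem setLIntegral_compl_ball_norm_rpow (c : ℝ) {R : ℝ} (hR : 0 < R) :
    ∫⁻ z in (ball (0 : E) R)ᶜ, ENNReal.ofReal (‖z‖ ^ c) ∂μ =
      ENNReal.ofReal (R ^ (finrank ℝ E + c)) *
        ∫⁻ z in (ball 0 1)ᶜ, ENNReal.ofReal (‖z‖ ^ c) ∂μ := by
  rw [← setLIntegral_smul_set_norm_rpow μ c hR, ← smul_unitBall_of_pos hR]
  congr 2
  ext z
  simp [mem_smul_set_iff_inv_smul_mem₀ hR.ne']

theorem setLIntegral_ball_norm_rpow_neg_lt_top (hd : 1 ≤ finrank ℝ E) {b : ℝ}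
    (hb : b < finrank ℝ E) :
    ∫⁻ z in ball (0 : E) 1, ENNReal.ofReal (‖z‖ ^ (-b)) ∂μ < ⊤ := by
  refine Integrable.lintegral_lt_top (integrableOn_ball_of_norm_le_rpow hd hb (C := 1)
    (f := fun z : E ↦ ‖z‖ ^ (-b)) (ae_of_all _ fun z ↦ ?_)
    (by fun_prop : Measurable fun z : E ↦ ‖z‖ ^ (-b)).aestronglyMeasurable)
  rw [Real.norm_of_nonneg (by positivity), one_mul]

theorem setLIntegral_compl_ball_norm_rpow_neg_lt_top {q : ℝ} (hq : finrank ℝ E < q) :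
    ∫⁻ z in (ball (0 : E) 1)ᶜ, ENNReal.ofReal (‖z‖ ^ (-q)) ∂μ < ⊤ := by
  have hq0 : 0 < q := lt_of_le_of_lt (Nat.cast_nonneg _) hq
  refine Integrable.lintegral_lt_top (Integrable.mono'
    (((integrable_one_add_norm hq).const_mul (2 ^ q)).restrict) (by fun_prop : Measurable
      fun z : E ↦ ‖z‖ ^ (-q)).aestronglyMeasurable.restrict ?_)
  refine (ae_restrict_iff' measurableSet_ball.compl).2 (ae_of_all _ fun z hz ↦ ?_)
  have hz1 : 1 ≤ ‖z‖ := by simpa using hz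
  rw [Real.norm_of_nonneg (by positivity)]
  calc ‖z‖ ^ (-q) = 2 ^ q * (2 * ‖z‖) ^ (-q) := by
        rw [Real.mul_rpow zero_le_two (by positivity), ← mul_assoc, ← Real.rpow_add two_pos,
          add_neg_cancel, Real.rpow_zero, one_mul]
    _ ≤ 2 ^ q * (1 + ‖z‖) ^ (-q) := by
        refine mul_le_mul_of_nonneg_left ?_ (by positivity)
        exact Real.rpow_le_rpow_of_nonpos (by positivity) (by linarith) (by linarith)

theorem exists_setLIntegral_ball_one_add_norm_rpow_neg_le {a : ℝ} (ha : 0 ≤ a)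
    (had : a ≠ finrank ℝ E) :
    ∃ K : ℝ≥0, ∀ T > 0, ∫⁻ y in ball (0 : E) T, ENNReal.ofReal ((1 + ‖y‖) ^ (-a)) ∂μ ≤
      K * ENNReal.ofReal (T ^ max (finrank ℝ E - a) 0) := by
  rcases had.lt_or_gt with had | had
  · have hd : 1 ≤ finrank ℝ E := by exact_mod_cast (ha.trans_lt had)
    have : Nontrivial E := Module.nontrivial_of_finrank_pos hd
    set I := ∫⁻ z in ball (0 : E) 1, ENNReal.ofReal (‖z‖ ^ (-a)) ∂μ
    have hI : I ≠ ⊤ := (setLIntegral_ball_norm_rpow_neg_lt_top μ hd had).ne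
    refine ⟨I.toNNReal, fun T hT ↦ ?_⟩
    have hpt : ∀ᵐ y ∂μ.restrict (ball 0 T),
        ENNReal.ofReal ((1 + ‖y‖) ^ (-a)) ≤ ENNReal.ofReal (‖y‖ ^ (-a)) := by
      -- only almost everywhere, since `‖0‖ ^ (-a) = 0` for `a ≠ 0`
      filter_upwards [ae_restrict_of_ae (Measure.ae_ne μ 0)] with y hy
      exact ENNReal.ofReal_le_ofReal (Real.rpow_le_rpow_of_nonpos (norm_pos_iff.2 hy)
        (by linarith) (by linarith))
    calc ∫⁻ y in ball (0 : E) T, ENNReal.ofReal ((1 + ‖y‖) ^ (-a)) ∂μ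
        ≤ ∫⁻ y in ball (0 : E) T, ENNReal.ofReal (‖y‖ ^ (-a)) ∂μ := lintegral_mono_ae hpt
      _ = I.toNNReal * ENNReal.ofReal (T ^ max (finrank ℝ E - a) 0) := by
        rw [setLIntegral_ball_norm_rpow μ _ hT, ENNReal.coe_toNNReal hI, mul_comm,
          max_eq_left (by linarith), sub_eq_add_neg]
  · set J := ∫⁻ y, ENNReal.ofReal ((1 + ‖y‖) ^ (-a)) ∂μ
    have hJ : J ≠ ⊤ := (finite_integral_one_add_norm had).ne
    refine ⟨J.toNNReal, fun T _ ↦ ?_⟩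
    rw [ENNReal.coe_toNNReal hJ, max_eq_right (by linarith), Real.rpow_zero,
      ENNReal.ofReal_one, mul_one]
    exact setLIntegral_le_lintegral _ _

variable {a b : ℝ} (x : E)

theorem setLIntegral_ball_le (ha : 0 ≤ a) {R : ℝ} (hR : 0 < R) (hRx : 2 * R ≤ 1 + ‖x‖) :
    ∫⁻ y in ball x R, ENNReal.ofReal ((1 + ‖y‖) ^ (-a) * ‖x - y‖ ^ (-b)) ∂μ ≤
      ENNReal.ofReal (R ^ (finrank ℝ E - a - b)) *
        ∫⁻ z in ball (0 : E) 1, ENNReal.ofReal (‖z‖ ^ (-b)) ∂μ := by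
  have hpt : ∀ y ∈ ball x R, ENNReal.ofReal ((1 + ‖y‖) ^ (-a) * ‖x - y‖ ^ (-b)) ≤
      ENNReal.ofReal (R ^ (-a)) * ENNReal.ofReal (‖y - x‖ ^ (-b)) := by
    intro y hy
    rw [← ENNReal.ofReal_mul (by positivity), norm_sub_rev]
    refine ENNReal.ofReal_le_ofReal (mul_le_mul_of_nonneg_right ?_ (by positivity))
    have : ‖x‖ - ‖y‖ ≤ ‖y - x‖ := by simpa [norm_sub_rev] using norm_sub_norm_le x y
    exact Real.rpow_le_rpow_of_nonpos hR (by rw [mem_ball_iff_norm] at hy; linarith)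
      (by linarith)
  have htrans : ∫⁻ y in ball x R, ENNReal.ofReal (‖y - x‖ ^ (-b)) ∂μ =
      ∫⁻ z in ball (0 : E) R, ENNReal.ofReal (‖z‖ ^ (-b)) ∂μ := by
    have hpre : (fun y ↦ y - x) ⁻¹' ball (0 : E) R = ball x R := by
      ext y; simp [dist_eq_norm]
    rw [← hpre, (measurePreserving_sub_right μ x).setLIntegral_comp_preimage measurableSet_ball
      (f := fun z ↦ ENNReal.ofReal (‖z‖ ^ (-b))) (by fun_prop)]
  calc ∫⁻ y in ball x R, ENNReal.ofReal ((1 + ‖y‖) ^ (-a) * ‖x - y‖ ^ (-b)) ∂μ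
      ≤ ∫⁻ y in ball x R, ENNReal.ofReal (R ^ (-a)) * ENNReal.ofReal (‖y - x‖ ^ (-b)) ∂μ :=
        setLIntegral_mono' measurableSet_ball hpt
    _ = ENNReal.ofReal (R ^ (-a)) * (ENNReal.ofReal (R ^ (finrank ℝ E + -b)) *
          ∫⁻ z in ball (0 : E) 1, ENNReal.ofReal (‖z‖ ^ (-b)) ∂μ) := by
        rw [lintegral_const_mul' _ _ ENNReal.ofReal_ne_top, htrans,
          setLIntegral_ball_norm_rpow μ _ hR]
    _ = ENNReal.ofReal (R ^ (finrank ℝ E - a - b)) *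
          ∫⁻ z in ball (0 : E) 1, ENNReal.ofReal (‖z‖ ^ (-b)) ∂μ := by
        rw [← mul_assoc, ← ENNReal.ofReal_mul (by positivity), ← Real.rpow_add hR]
        ring_nf

theorem setLIntegral_compl_ball_le (ha : 0 ≤ a) (hb : 0 ≤ b) {T : ℝ} (hT : 0 < T)
    (hTx : 2 * ‖x‖ ≤ T) :
    ∫⁻ y in (ball 0 T)ᶜ, ENNReal.ofReal ((1 + ‖y‖) ^ (-a) * ‖x - y‖ ^ (-b)) ∂μ ≤
      ENNReal.ofReal (2 ^ b * T ^ (finrank ℝ E - a - b)) *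
        ∫⁻ z in (ball (0 : E) 1)ᶜ, ENNReal.ofReal (‖z‖ ^ (-(a + b))) ∂μ := by
  have hpt : ∀ y ∈ (ball (0 : E) T)ᶜ, ENNReal.ofReal ((1 + ‖y‖) ^ (-a) * ‖x - y‖ ^ (-b)) ≤
      ENNReal.ofReal (2 ^ b) * ENNReal.ofReal (‖y‖ ^ (-(a + b))) := by
    intro y hy
    have hyT : T ≤ ‖y‖ := by simpa using hy
    have hy0 : 0 < ‖y‖ := hT.trans_le hyT
    have hxy : ‖y‖ / 2 ≤ ‖x - y‖ := by
      have : ‖y‖ - ‖x‖ ≤ ‖x - y‖ := by simpa [norm_sub_rev] using norm_sub_norm_le y x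
      linarith
    rw [← ENNReal.ofReal_mul (by positivity)]
    refine ENNReal.ofReal_le_ofReal ?_
    calc (1 + ‖y‖) ^ (-a) * ‖x - y‖ ^ (-b) ≤ ‖y‖ ^ (-a) * (‖y‖ / 2) ^ (-b) := by
          gcongr ?_ * ?_
          · exact Real.rpow_le_rpow_of_nonpos hy0 (by linarith) (by linarith)
          · exact Real.rpow_le_rpow_of_nonpos (by positivity) hxy (by linarith)
      _ = 2 ^ b * ‖y‖ ^ (-(a + b)) := by
          rw [Real.div_rpow hy0.le zero_le_two, Real.rpow_neg zero_le_two, div_inv_eq_mul,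
            neg_add, Real.rpow_add hy0]
          ring
  calc _ ≤ ∫⁻ y in (ball (0 : E) T)ᶜ,
          ENNReal.ofReal (2 ^ b) * ENNReal.ofReal (‖y‖ ^ (-(a + b))) ∂μ :=
        setLIntegral_mono' measurableSet_ball.compl hpt
    _ = _ := by
        rw [lintegral_const_mul' _ _ ENNReal.ofReal_ne_top,
          setLIntegral_compl_ball_norm_rpow μ _ hT, ← mul_assoc,
          ← ENNReal.ofReal_mul (by positivity)]
        ring_nf

theorem exists_lintegral_one_add_norm_rpow_mul_norm_sub_rpow_le (ha : 0 ≤ a) (hb : 0 ≤ b)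
    (hbd : b < finrank ℝ E) (hab : finrank ℝ E < a + b) (had : a ≠ finrank ℝ E) :
    ∃ K : ℝ≥0, ∀ x : E, ∫⁻ y, ENNReal.ofReal ((1 + ‖y‖) ^ (-a) * ‖x - y‖ ^ (-b)) ∂μ ≤
      K * ENNReal.ofReal ((1 + ‖x‖) ^ (-min (a + b - finrank ℝ E) b)) := by
  have hd : 1 ≤ finrank ℝ E := by exact_mod_cast (hb.trans_lt hbd)
  set d : ℝ := (finrank ℝ E : ℝ)
  set m := min (a + b - d) b
  set M := max (d - a) 0
  have hdab : d - a - b ≤ -m := by simp only [m]; linarith [min_le_left (a + b - d) b]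
  have hMm : -b + M = -m := by
    simp only [m, M, min_def, max_def]
    split_ifs <;> linarith
  obtain ⟨Ka, hKa⟩ := exists_setLIntegral_ball_one_add_norm_rpow_neg_le μ ha had
  set Ib := ∫⁻ z in ball (0 : E) 1, ENNReal.ofReal (‖z‖ ^ (-b)) ∂μ
  have hIb : Ib ≠ ⊤ := (setLIntegral_ball_norm_rpow_neg_lt_top μ hd hbd).ne
  set Oab := ∫⁻ z in (ball (0 : E) 1)ᶜ, ENNReal.ofReal (‖z‖ ^ (-(a + b))) ∂μ
  have hOab : Oab ≠ ⊤ := (setLIntegral_compl_ball_norm_rpow_neg_lt_top μ hab).ne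
  set K : ℝ≥0∞ := ENNReal.ofReal ((2⁻¹) ^ (d - a - b)) * Ib +
    ENNReal.ofReal ((2⁻¹) ^ (-b) * 2 ^ M) * Ka + ENNReal.ofReal (2 ^ b * 2 ^ (d - a - b)) * Oab
  have hK : K ≠ ⊤ := by simp [K, hIb, hOab, ENNReal.mul_eq_top]
  refine ⟨K.toNNReal, fun x ↦ ?_⟩
  set u := 1 + ‖x‖
  have hu : 1 ≤ u := le_add_of_nonneg_right (norm_nonneg x)
  have hu0 : 0 < u := one_pos.trans_le hu
  have hmiddle : (2⁻¹ * u) ^ (-b) * (2 * u) ^ M = (2⁻¹) ^ (-b) * 2 ^ M * u ^ (-m) := by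
    rw [Real.mul_rpow (by norm_num) hu0.le, Real.mul_rpow zero_le_two hu0.le, ← hMm,
      Real.rpow_add hu0]
    ring
  calc ∫⁻ y, ENNReal.ofReal ((1 + ‖y‖) ^ (-a) * ‖x - y‖ ^ (-b)) ∂μ
      ≤ ENNReal.ofReal ((2⁻¹ * u) ^ (d - a - b)) * Ib +
        ENNReal.ofReal ((2⁻¹ * u) ^ (-b) * (2 * u) ^ M) * Ka +
        ENNReal.ofReal (2 ^ b * (2 * u) ^ (d - a - b)) * Oab := by
        refine (lintegral_le_setLIntegral_add_diff_add_compl _ (ball x (2⁻¹ * u))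
          (ball 0 (2 * u))).trans ?_
        gcongr
        · exact setLIntegral_ball_le μ x ha (by positivity) (by linarith)
        · calc _ ≤ ENNReal.ofReal ((2⁻¹ * u) ^ (-b)) * (Ka * ENNReal.ofReal ((2 * u) ^ M)) :=
                (setLIntegral_ball_diff_ball_le μ x hb (by positivity) _).trans
                  (by gcongr; exact hKa _ (by positivity))
            _ = _ := by rw [ENNReal.ofReal_mul (by positivity)]; ring
        · exact setLIntegral_compl_ball_le μ x ha hb (by positivity) (by linarith)
    _ ≤ ENNReal.ofReal ((2⁻¹) ^ (d - a - b) * u ^ (-m)) * Ib +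
        ENNReal.ofReal ((2⁻¹) ^ (-b) * 2 ^ M * u ^ (-m)) * Ka +
        ENNReal.ofReal (2 ^ b * (2 ^ (d - a - b) * u ^ (-m))) * Oab := by
        rw [hmiddle]
        gcongr
        · exact mul_rpow_le_rpow_mul (by norm_num) hu hdab
        · exact mul_rpow_le_rpow_mul zero_le_two hu hdab
    _ = K.toNNReal * ENNReal.ofReal (u ^ (-m)) := by
        rw [ENNReal.coe_toNNReal hK]
        simp only [K, ENNReal.ofReal_mul (by positivity : (0 : ℝ) ≤ 2 ^ b),
          ENNReal.ofReal_mul (by positivity : (0 : ℝ) ≤ 2 ^ (d - a - b)),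
          ENNReal.ofReal_mul (by positivity : (0 : ℝ) ≤ (2⁻¹) ^ (d - a - b)),
          ENNReal.ofReal_mul (by positivity : (0 : ℝ) ≤ (2⁻¹) ^ (-b) * 2 ^ M)]
        ring

end

theorem convolution_decay_general (N : ℕ) (s ν C : ℝ) (hs0 : 0 < s)
    (hN : 2 * s < (N : ℝ)) (hν : 0 ≤ ν) (hC : 0 < C)
    (hne : ν + 2 * s ≠ (N : ℝ) - 2 * s)
    (v : EuclideanSpace ℝ (Fin N) → ℝ)
    (hbd : ∀ x, |v x| ≤ C / (1 + ‖x‖) ^ ν) :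
    ∃ C' > 0, ∀ x : EuclideanSpace ℝ (Fin N),
      |∫ y, (1 + ‖y‖ ^ 2) ^ (-(2 * s)) * ‖x - y‖ ^ (-((N : ℝ) - 2 * s)) * v y| ≤
        C' / (1 + ‖x‖) ^ min (ν + 2 * s) ((N : ℝ) - 2 * s) := by
  obtain ⟨K, hK⟩ := exists_lintegral_one_add_norm_rpow_mul_norm_sub_rpow_le
    (volume : Measure (EuclideanSpace ℝ (Fin N))) (a := ν + 4 * s) (b := N - 2 * s)
    (by linarith) (by linarith) (by simp; linarith) (by simp; linarith)
    (by simp; contrapose! hne; linarith)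
  simp only [finrank_euclideanSpace_fin, show ν + 4 * s + (N - 2 * s) - N = ν + 2 * s by ring]
    at hK
  set c := 2 ^ (2 * s) * C
  refine ⟨c * (K + 1), by positivity, fun x ↦ ?_⟩
  calc |∫ y, (1 + ‖y‖ ^ 2) ^ (-(2 * s)) * ‖x - y‖ ^ (-((N : ℝ) - 2 * s)) * v y|
      ≤ (∫⁻ y, ENNReal.ofReal
          ‖(1 + ‖y‖ ^ 2) ^ (-(2 * s)) * ‖x - y‖ ^ (-((N : ℝ) - 2 * s)) * v y‖).toReal :=
        (Real.norm_eq_abs _).symm.trans_le (norm_integral_le_lintegral_norm _)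
    _ ≤ (∫⁻ y, ENNReal.ofReal c *
          ENNReal.ofReal ((1 + ‖y‖) ^ (-(ν + 4 * s)) * ‖x - y‖ ^ (-((N : ℝ) - 2 * s)))).toReal := by
        refine ENNReal.toReal_mono ?_ (lintegral_mono fun y ↦ ?_)
        · rw [lintegral_const_mul' _ _ ENNReal.ofReal_ne_top]
          exact ENNReal.mul_ne_top ENNReal.ofReal_ne_top ((hK x).trans_lt (by finiteness)).ne
        · rw [← ENNReal.ofReal_mul (by positivity), Real.norm_eq_abs]
          exact ENNReal.ofReal_le_ofReal (abs_one_add_norm_sq_rpow_mul_mul_le hs0 x y (hbd y))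
    _ ≤ c * (K * (1 + ‖x‖) ^ (-min (ν + 2 * s) ((N : ℝ) - 2 * s))) := by
        rw [lintegral_const_mul' _ _ ENNReal.ofReal_ne_top, ENNReal.toReal_mul,
          ENNReal.toReal_ofReal (by positivity)]
        gcongr
        refine ENNReal.toReal_le_of_le_ofReal (by positivity) ((hK x).trans_eq ?_)
        rw [ENNReal.ofReal_mul K.coe_nonneg, ENNReal.ofReal_coe_nnreal]
    _ ≤ c * (K + 1) / (1 + ‖x‖) ^ min (ν + 2 * s) ((N : ℝ) - 2 * s) := by
        rw [Real.rpow_neg (by positivity), ← div_eq_mul_inv, mul_div_assoc']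
        gcongr
        linarith

/-- Convolution-type decay estimate: if `|v(x)| ≤ C(1+|x|)^{−ν}`, then the Riesz-type
integral against the kernel `(1+|y|²)^{−2s}|x−y|^{−(N−2s)}` decays like
`(1+|x|)^{−min(ν+2s, N−2s)}` (away from the borderline case `ν+2s = N−2s`). -/
theorem convolution_decay (N : ℕ) (hN1 : 1 ≤ N) (s ν C : ℝ) (hs0 : 0 < s) (hs1 : s < 1)
    (hN : 2 * s < (N : ℝ)) (hν : 0 ≤ ν) (hC : 0 < C)
    (hne : ν + 2 * s ≠ (N : ℝ) - 2 * s)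
    (v : EuclideanSpace ℝ (Fin N) → ℝ) (hv : Measurable v)
    (hbd : ∀ x, |v x| ≤ C / (1 + ‖x‖) ^ ν) :
    ∃ C' > 0, ∀ x : EuclideanSpace ℝ (Fin N),
      |∫ y, (1 + ‖y‖ ^ 2) ^ (-(2 * s)) * ‖x - y‖ ^ (-((N : ℝ) - 2 * s)) * v y| ≤
        C' / (1 + ‖x‖) ^ min (ν + 2 * s) ((N : ℝ) - 2 * s) :=
  convolution_decay_general N s ν C hs0 hN hν hC hne v hbd
end

section
/- Suppose h : S^N → ℝ is a bounded measurable function satisfying a·h(ω) = ∫_{S^N} |ω−η|^{−(N−2s)} h(η) dη for almost every ω, with a ≠ 0 and 0 < 2s < N. Then h agrees almost everywhere with a continuous function on S^N. -/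
/-!
The kernel `|ω - η|^(-α)`, `α = N - 2s < N`, is uniformly integrable on `S^N` because caps of
radius `ρ` have measure `O(ρ^N)` (the cone over a cap is covered by `O(1/ρ)` balls of radius
`2ρ`): by the layer-cake formula its integral over a cap of radius `ε` is `O(ε^(N-α))`,
uniformly in the centre. Truncating the kernel to `max(|ω - η|, ε)^(-α)` therefore changes the
potential of a bounded `h` by `O(ε^(N-α))` uniformly, while the truncated potential is continuous
by dominated convergence; a uniform limit of continuous functions is continuous. Since `a ≠ 0`,
`h` agrees a.e. with `a⁻¹` times this potential.
-/

open MeasureTheory Metric Set Filter Topology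
open scoped ENNReal NNReal Pointwise

theorem lintegral_Ioi_rpow_neg {β T : ℝ} (hβ : 1 < β) (hT : 0 < T) :
    ∫⁻ t in Ioi T, ENNReal.ofReal (t ^ (-β)) = ENNReal.ofReal (T ^ (1 - β) / (β - 1)) := by
  have hβ' : -β < -1 := by linarith
  rw [← ofReal_integral_eq_lintegral_ofReal (integrableOn_Ioi_rpow_of_lt hβ' hT)
    ((ae_restrict_mem measurableSet_Ioi).mono fun t ht => Real.rpow_nonneg (hT.trans ht).le _),
    integral_Ioi_rpow_of_lt hβ' hT, neg_div, ← div_neg, neg_add', neg_neg, add_comm,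
    ← sub_eq_add_neg]

theorem lintegral_le_of_meas_le_rpow_neg {Ω : Type*} [MeasurableSpace Ω] {ν : Measure Ω}
    {f : Ω → ℝ} (hf0 : 0 ≤ f) (hfm : AEMeasurable f ν) {C : ℝ≥0∞} {β T : ℝ} (hβ : 1 < β)
    (hT : 0 < T) (hdistr : ∀ t > T, ν {ω | t ≤ f ω} ≤ C * ENNReal.ofReal (t ^ (-β))) :
    ∫⁻ ω, ENNReal.ofReal (f ω) ∂ν ≤
      ENNReal.ofReal T * ν univ + C * ENNReal.ofReal (T ^ (1 - β) / (β - 1)) := by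
  rw [lintegral_eq_lintegral_meas_le ν (.of_forall hf0) hfm, ← Ioc_union_Ioi_eq_Ioi hT.le,
    lintegral_union measurableSet_Ioi (Ioc_disjoint_Ioi le_rfl)]
  gcongr
  · calc ∫⁻ t in Ioc 0 T, ν {ω | t ≤ f ω} ≤ ∫⁻ _ in Ioc 0 T, ν univ :=
          lintegral_mono fun t => measure_mono (subset_univ _)
      _ = ENNReal.ofReal T * ν univ := by
          rw [setLIntegral_const, Real.volume_Ioc, sub_zero, mul_comm]
  · calc ∫⁻ t in Ioi T, ν {ω | t ≤ f ω} ≤ ∫⁻ t in Ioi T, C * ENNReal.ofReal (t ^ (-β)) :=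
          setLIntegral_mono' measurableSet_Ioi hdistr
      _ = C * ENNReal.ofReal (T ^ (1 - β) / (β - 1)) := by
          rw [lintegral_const_mul _ (by fun_prop), lintegral_Ioi_rpow_neg hβ hT]

section UpperRegular

variable {X : Type*} [PseudoMetricSpace X] [MeasurableSpace X] [OpensMeasurableSpace X]
  {μ : Measure X} {C : ℝ≥0} {n α : ℝ}

/-- Upper Ahlfors `n`-regularity at scales `≤ 1`. -/
def UpperRegular (μ : Measure X) (C : ℝ≥0) (n : ℝ) : Prop :=
  ∀ x, ∀ r ∈ Ioc (0 : ℝ) 1, μ (closedBall x r) ≤ C * ENNReal.ofReal (r ^ n)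

theorem UpperRegular.setLIntegral_closedBall_rpow_neg_dist_le (hμ : UpperRegular μ C n)
    (hα : 0 < α) (hαn : α < n) (x : X) {δ : ℝ} (hδ : δ ∈ Ioc 0 1) :
    ∫⁻ y in closedBall x δ, ENNReal.ofReal (dist x y ^ (-α)) ∂μ ≤
      C * ENNReal.ofReal (n / (n - α) * δ ^ (n - α)) := by
  obtain ⟨hδ0, hδ1⟩ := hδ
  have hnα : 0 < n - α := sub_pos.mpr hαn
  have hβ : 1 < n / α := (one_lt_div hα).mpr hαn
  have hdistr : ∀ t > δ ^ (-α), μ.restrict (closedBall x δ) {y | t ≤ dist x y ^ (-α)} ≤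
      C * ENNReal.ofReal (t ^ (-(n / α))) := by
    intro t ht
    have ht0 : 0 < t := (Real.rpow_pos_of_pos hδ0 _).trans ht
    have hsub : {y | t ≤ dist x y ^ (-α)} ⊆ closedBall x (t ^ (-α)⁻¹) := by
      intro y hy
      have hxy : 0 < dist x y := by
        by_contra! h0
        have : dist x y ^ (-α) = 0 := by
          rw [le_antisymm h0 dist_nonneg, Real.zero_rpow (neg_ne_zero.mpr hα.ne')]
        exact (ht0.trans_le hy).ne' this
      rw [mem_closedBall, dist_comm, Real.le_rpow_inv_iff_of_neg hxy ht0 (neg_neg_of_pos hα)]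
      exact hy
    have hr : t ^ (-α)⁻¹ ∈ Ioc 0 1 := by
      refine ⟨Real.rpow_pos_of_pos ht0 _, ?_⟩
      rw [Real.rpow_inv_le_iff_of_neg ht0 zero_lt_one (neg_neg_of_pos hα), Real.one_rpow]
      exact (Real.one_le_rpow_of_pos_of_le_one_of_nonpos hδ0 hδ1 (by linarith)).trans ht.le
    calc μ.restrict (closedBall x δ) {y | t ≤ dist x y ^ (-α)}
        ≤ μ (closedBall x (t ^ (-α)⁻¹)) :=
          (Measure.restrict_apply_le _ _).trans (measure_mono hsub)
      _ ≤ C * ENNReal.ofReal ((t ^ (-α)⁻¹) ^ n) := hμ x _ hr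
      _ = C * ENNReal.ofReal (t ^ (-(n / α))) := by
          rw [← Real.rpow_mul ht0.le]; congr 3; field_simp
  refine (lintegral_le_of_meas_le_rpow_neg (fun y => Real.rpow_nonneg dist_nonneg _)
    (by fun_prop) hβ (Real.rpow_pos_of_pos hδ0 _) hdistr).trans ?_
  have hball : μ.restrict (closedBall x δ) univ ≤ C * ENNReal.ofReal (δ ^ n) := by
    rw [Measure.restrict_apply_univ]; exact hμ x δ ⟨hδ0, hδ1⟩
  have hinner : δ ^ (-α) * δ ^ n = δ ^ (n - α) := by
    rw [← Real.rpow_add hδ0, neg_add_eq_sub]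
  have htail : (δ ^ (-α)) ^ (1 - n / α) / (n / α - 1) = α / (n - α) * δ ^ (n - α) := by
    rw [← Real.rpow_mul hδ0.le, show -α * (1 - n / α) = n - α by field_simp; ring]
    field_simp
  calc ENNReal.ofReal (δ ^ (-α)) * μ.restrict (closedBall x δ) univ +
        C * ENNReal.ofReal ((δ ^ (-α)) ^ (1 - n / α) / (n / α - 1))
      ≤ ENNReal.ofReal (δ ^ (-α)) * (C * ENNReal.ofReal (δ ^ n)) +
        C * ENNReal.ofReal (α / (n - α) * δ ^ (n - α)) := by rw [htail]; gcongr
    _ = C * ENNReal.ofReal (n / (n - α) * δ ^ (n - α)) := by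
        rw [mul_left_comm, ← ENNReal.ofReal_mul (by positivity), hinner, ← mul_add,
          ← ENNReal.ofReal_add (by positivity) (by positivity)]
        congr 2
        field_simp
        ring

/-- `α` is the exponent of the kernel, not the order of the potential: `α = N - 2s` on `S^N`. -/
noncomputable def rieszPotential (μ : Measure X) (α : ℝ) (h : X → ℝ) (x : X) : ℝ :=
  ∫ y, dist x y ^ (-α) * h y ∂μ

noncomputable def truncatedRieszPotential (μ : Measure X) (α ε : ℝ) (h : X → ℝ) (x : X) : ℝ :=
  ∫ y, max (dist x y) ε ^ (-α) * h y ∂μ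

theorem UpperRegular.integrable_rpow_neg_dist [IsFiniteMeasure μ] (hμ : UpperRegular μ C n)
    (hα : 0 < α) (hαn : α < n) (x : X) : Integrable (fun y => dist x y ^ (-α)) μ := by
  have hmeas : AEStronglyMeasurable (fun y => dist x y ^ (-α)) μ :=
    (by fun_prop : Measurable fun y => dist x y ^ (-α)).aestronglyMeasurable
  rw [← integrableOn_univ, ← union_compl_self (closedBall x 1)]
  refine .union ⟨hmeas.restrict, ?_⟩ (.of_bound (measure_lt_top _ _) hmeas.restrict 1 ?_)
  · rw [hasFiniteIntegral_iff_ofReal (.of_forall fun y => by positivity)]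
    exact (hμ.setLIntegral_closedBall_rpow_neg_dist_le hα hαn x ⟨one_pos, le_rfl⟩).trans_lt
      (by finiteness)
  · filter_upwards [ae_restrict_mem measurableSet_closedBall.compl] with y hy
    rw [mem_compl_iff, mem_closedBall, not_le, dist_comm] at hy
    rw [Real.norm_of_nonneg (by positivity)]
    exact Real.rpow_le_one_of_one_le_of_nonpos hy.le (by linarith)

theorem continuous_truncatedRieszPotential [IsFiniteMeasure μ] {h : X → ℝ} {M ε : ℝ}
    (hα : 0 ≤ α) (hε : 0 < ε) (hh : AEStronglyMeasurable h μ) (hM : ∀ y, |h y| ≤ M) :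
    Continuous (truncatedRieszPotential μ α ε h) := by
  have hcont : ∀ y : X, Continuous fun x : X => max (dist x y) ε ^ (-α) :=
    fun y => ((continuous_id.dist (continuous_const (y := y))).max continuous_const).rpow_const
      fun x => Or.inl (hε.trans_le (le_max_right _ _)).ne'
  refine continuous_of_dominated (bound := fun _ => ε ^ (-α) * M)
    (fun x => ?_) (fun x => .of_forall fun y => ?_) (integrable_const _)
    (.of_forall fun y => (hcont y).mul continuous_const)
  · exact (by fun_prop : Measurable fun y => max (dist x y) ε ^ (-α)).aestronglyMeasurable.mul hh
  · rw [norm_mul, Real.norm_of_nonneg (by positivity), Real.norm_eq_abs]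
    exact mul_le_mul (Real.rpow_le_rpow_of_nonpos hε (le_max_right _ _) (neg_nonpos.2 hα))
      (hM y) (abs_nonneg _) (by positivity)

theorem UpperRegular.lintegral_abs_rpow_neg_dist_sub_max_le (hμ : UpperRegular μ C n)
    (hα : 0 < α) (hαn : α < n) (x : X) {ε : ℝ} (hε : ε ∈ Ioc 0 1) :
    ∫⁻ y, ENNReal.ofReal |dist x y ^ (-α) - max (dist x y) ε ^ (-α)| ∂μ ≤
      C * ENNReal.ofReal ((n / (n - α) + 1) * ε ^ (n - α)) := by
  obtain ⟨hε0, hε1⟩ := hε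
  have hpt : ∀ y, ENNReal.ofReal |dist x y ^ (-α) - max (dist x y) ε ^ (-α)| ≤
      (closedBall x ε).indicator
        (fun y => ENNReal.ofReal (dist x y ^ (-α)) + ENNReal.ofReal (ε ^ (-α))) y := by
    intro y
    by_cases hy : y ∈ closedBall x ε
    · rw [indicator_of_mem hy, ← ENNReal.ofReal_add (by positivity) (by positivity)]
      refine ENNReal.ofReal_le_ofReal ((abs_sub _ _).trans (add_le_add ?_ ?_))
      · exact (abs_of_nonneg (by positivity)).le
      · rw [abs_of_nonneg (by positivity)]
        exact Real.rpow_le_rpow_of_nonpos hε0 (le_max_right _ _) (by linarith)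
    · have hy' : ε < dist x y := by rwa [mem_closedBall, dist_comm, not_le] at hy
      simp [indicator_of_notMem hy, max_eq_left hy'.le]
  calc ∫⁻ y, ENNReal.ofReal |dist x y ^ (-α) - max (dist x y) ε ^ (-α)| ∂μ
      ≤ ∫⁻ y in closedBall x ε,
          ENNReal.ofReal (dist x y ^ (-α)) + ENNReal.ofReal (ε ^ (-α)) ∂μ := by
        rw [← lintegral_indicator measurableSet_closedBall]; exact lintegral_mono hpt
    _ ≤ C * ENNReal.ofReal (n / (n - α) * ε ^ (n - α)) +
          ENNReal.ofReal (ε ^ (-α)) * (C * ENNReal.ofReal (ε ^ n)) := by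
        rw [lintegral_add_right _ measurable_const, setLIntegral_const]
        gcongr
        · exact hμ.setLIntegral_closedBall_rpow_neg_dist_le hα hαn x ⟨hε0, hε1⟩
        · exact hμ x ε ⟨hε0, hε1⟩
    _ = C * ENNReal.ofReal ((n / (n - α) + 1) * ε ^ (n - α)) := by
        have hnα : 0 ≤ n / (n - α) := div_nonneg (by linarith) (by linarith)
        rw [mul_left_comm, ← ENNReal.ofReal_mul (Real.rpow_pos_of_pos hε0 _).le,
          ← Real.rpow_add hε0, ← mul_add, neg_add_eq_sub, ← ENNReal.ofReal_add
          (mul_nonneg hnα (Real.rpow_pos_of_pos hε0 _).le) (Real.rpow_pos_of_pos hε0 _).le,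
          add_mul, one_mul]

theorem UpperRegular.abs_rieszPotential_sub_truncated_le [IsFiniteMeasure μ]
    (hμ : UpperRegular μ C n) (hα : 0 < α) (hαn : α < n) {h : X → ℝ} {M ε : ℝ}
    (hh : AEStronglyMeasurable h μ) (hM : ∀ y, |h y| ≤ M) (hM0 : 0 ≤ M) (hε : ε ∈ Ioc 0 1)
    (x : X) :
    |rieszPotential μ α h x - truncatedRieszPotential μ α ε h x| ≤
      C * ((n / (n - α) + 1) * ε ^ (n - α)) * M := by
  have hh_bdd : ∀ᵐ y ∂μ, ‖h y‖ ≤ M := .of_forall hM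
  have hKε : Integrable (fun y => max (dist x y) ε ^ (-α)) μ :=
    .of_bound (by fun_prop : Measurable _).aestronglyMeasurable (ε ^ (-α)) <| .of_forall fun y => by
      rw [Real.norm_of_nonneg (by positivity)]
      exact Real.rpow_le_rpow_of_nonpos hε.1 (le_max_right _ _) (by linarith)
  rw [rieszPotential, truncatedRieszPotential, ← integral_sub
    ((hμ.integrable_rpow_neg_dist hα hαn x).mul_bdd hh hh_bdd) (hKε.mul_bdd hh hh_bdd),
    ← Real.norm_eq_abs]
  refine (norm_integral_le_lintegral_norm _).trans ?_
  have hpt : ∀ y, ENNReal.ofReal ‖dist x y ^ (-α) * h y - max (dist x y) ε ^ (-α) * h y‖ ≤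
      ENNReal.ofReal |dist x y ^ (-α) - max (dist x y) ε ^ (-α)| * ENNReal.ofReal M := by
    intro y
    rw [← ENNReal.ofReal_mul (abs_nonneg _), ← sub_mul, norm_mul, Real.norm_eq_abs,
      Real.norm_eq_abs]
    exact ENNReal.ofReal_le_ofReal (mul_le_mul_of_nonneg_left (hM y) (abs_nonneg _))
  calc (∫⁻ y, ENNReal.ofReal ‖dist x y ^ (-α) * h y - max (dist x y) ε ^ (-α) * h y‖ ∂μ).toReal
      ≤ (C * ENNReal.ofReal ((n / (n - α) + 1) * ε ^ (n - α)) * ENNReal.ofReal M).toReal := by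
        refine ENNReal.toReal_mono (by finiteness) ((lintegral_mono hpt).trans ?_)
        rw [lintegral_mul_const _ (by fun_prop)]
        gcongr
        exact hμ.lintegral_abs_rpow_neg_dist_sub_max_le hα hαn x hε
    _ = C * ((n / (n - α) + 1) * ε ^ (n - α)) * M := by
        have hc : 0 ≤ n / (n - α) + 1 :=
          add_nonneg (div_nonneg (by linarith) (by linarith)) zero_le_one
        rw [ENNReal.toReal_mul, ENNReal.toReal_mul, ENNReal.toReal_ofReal hM0,
          ENNReal.toReal_ofReal (mul_nonneg hc (Real.rpow_pos_of_pos hε.1 _).le),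
          ENNReal.coe_toReal]

theorem UpperRegular.continuous_rieszPotential [IsFiniteMeasure μ] (hμ : UpperRegular μ C n)
    (hα : 0 < α) (hαn : α < n) {h : X → ℝ} {M : ℝ} (hh : AEStronglyMeasurable h μ)
    (hM : ∀ y, |h y| ≤ M) : Continuous (rieszPotential μ α h) := by
  have hM' : ∀ y, |h y| ≤ max M 0 := fun y => (hM y).trans (le_max_left _ _)
  have hlim : Tendsto (fun ε => C * ((n / (n - α) + 1) * ε ^ (n - α)) * max M 0)
      (𝓝[>] 0) (𝓝 0) := by
    refine (Continuous.tendsto' ?_ 0 0 ?_).mono_left nhdsWithin_le_nhds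
    · exact (continuous_const.mul (continuous_const.mul
        (Real.continuous_rpow_const (by linarith)))).mul continuous_const
    · simp [Real.zero_rpow (by linarith : n - α ≠ 0)]
  refine continuous_of_uniform_approx_of_continuous fun u hu => ?_
  obtain ⟨e, he, hue⟩ := Metric.mem_uniformity_dist.1 hu
  obtain ⟨ε, hεe, hε⟩ := ((hlim.eventually (gt_mem_nhds he)).and (Ioc_mem_nhdsGT one_pos)).exists
  refine ⟨_, continuous_truncatedRieszPotential hα.le hε.1 hh hM', fun x => hue ?_⟩
  rw [Real.dist_eq]
  exact (hμ.abs_rieszPotential_sub_truncated_le hα hαn hh hM' (le_max_right _ _) hε x).trans_lt hεe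

end UpperRegular

section Sphere

variable {E : Type*} [NormedAddCommGroup E] [NormedSpace ℝ E]

theorem Ioo_smul_image_closedBall_subset (ω : sphere (0 : E) 1) {ρ : ℝ} (hρ : 0 < ρ) :
    Ioo (0 : ℝ) 1 • ((↑) '' closedBall ω ρ : Set E) ⊆
      ⋃ k ∈ Finset.range (⌊1 / ρ⌋₊ + 1), closedBall ((k * ρ) • (ω : E)) (2 * ρ) := by
  rintro _ ⟨t, ⟨ht0, ht1⟩, _, ⟨η, hη, rfl⟩, rfl⟩
  set k := ⌊t / ρ⌋₊
  have hkt : k * ρ ≤ t := (le_div_iff₀ hρ).1 (Nat.floor_le (by positivity))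
  have htk : t - k * ρ ≤ ρ := by
    have := (div_lt_iff₀ hρ).1 (Nat.lt_floor_add_one (t / ρ))
    linarith
  have hk : k < ⌊1 / ρ⌋₊ + 1 :=
    Nat.lt_succ_of_le (Nat.floor_le_floor (div_le_div_of_nonneg_right ht1.le hρ.le))
  refine mem_biUnion (Finset.mem_range.2 hk) ?_
  have hηω : ‖(η : E) - ω‖ ≤ ρ := by rwa [← dist_eq_norm, ← Subtype.dist_eq, ← mem_closedBall]
  rw [mem_closedBall, dist_eq_norm,
    show t • (η : E) - (k * ρ) • (ω : E) = t • ((η : E) - ω) + (t - k * ρ) • (ω : E) by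
      rw [smul_sub, sub_smul]; abel]
  calc ‖t • ((η : E) - ω) + (t - k * ρ) • (ω : E)‖
      ≤ t * ‖(η : E) - ω‖ + (t - k * ρ) * ‖(ω : E)‖ := by
        refine (norm_add_le _ _).trans_eq ?_
        rw [norm_smul, norm_smul, Real.norm_of_nonneg ht0.le, Real.norm_of_nonneg (by linarith)]
    _ ≤ 1 * ρ + ρ * 1 := by
        rw [norm_eq_of_mem_sphere ω]
        gcongr
    _ = 2 * ρ := by ring

variable [FiniteDimensional ℝ E] [MeasurableSpace E] [BorelSpace E] (μ : Measure E)
  [μ.IsAddHaarMeasure]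

theorem toSphere_closedBall_le (ω : sphere (0 : E) 1) {ρ : ℝ} (hρ : ρ ∈ Ioc 0 1) :
    μ.toSphere (closedBall ω ρ) ≤ Module.finrank ℝ E * 2 ^ (Module.finrank ℝ E + 1) *
      μ (ball 0 1) * ENNReal.ofReal (ρ ^ ((Module.finrank ℝ E : ℝ) - 1)) := by
  obtain ⟨hρ0, hρ1⟩ := hρ
  set d := Module.finrank ℝ E
  have hcount : ((⌊1 / ρ⌋₊ + 1 : ℕ) : ℝ) * (2 * ρ) ^ d ≤ 2 ^ (d + 1) * ρ ^ ((d : ℝ) - 1) := by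
    have hfloor : ((⌊1 / ρ⌋₊ + 1 : ℕ) : ℝ) ≤ 2 / ρ := by
      have := Nat.floor_le (one_div_pos.2 hρ0).le
      have : 1 ≤ 1 / ρ := one_le_one_div hρ0 hρ1
      push_cast
      linarith [show 2 / ρ = 1 / ρ + 1 / ρ by ring]
    calc ((⌊1 / ρ⌋₊ + 1 : ℕ) : ℝ) * (2 * ρ) ^ d ≤ 2 / ρ * (2 * ρ) ^ d := by gcongr
      _ = 2 ^ (d + 1) * ρ ^ ((d : ℝ) - 1) := by
        rw [Real.rpow_sub_one hρ0.ne', Real.rpow_natCast]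
        field_simp
        ring
  calc μ.toSphere (closedBall ω ρ) = d * μ (Ioo (0 : ℝ) 1 • ((↑) '' closedBall ω ρ)) :=
        μ.toSphere_apply' measurableSet_closedBall
    _ ≤ d * ∑ k ∈ Finset.range (⌊1 / ρ⌋₊ + 1), μ (closedBall ((k * ρ) • (ω : E)) (2 * ρ)) := by
        gcongr
        exact (measure_mono (Ioo_smul_image_closedBall_subset ω hρ0)).trans
          (measure_biUnion_finset_le _ _)
    _ = d * (ENNReal.ofReal (((⌊1 / ρ⌋₊ + 1 : ℕ) : ℝ) * (2 * ρ) ^ d) * μ (ball 0 1)) := by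
        simp_rw [μ.addHaar_closedBall _ (by positivity : 0 ≤ 2 * ρ)]
        rw [Finset.sum_const, Finset.card_range, nsmul_eq_mul, ENNReal.ofReal_mul (by positivity),
          ENNReal.ofReal_natCast, mul_assoc]
    _ ≤ d * (ENNReal.ofReal (2 ^ (d + 1) * ρ ^ ((d : ℝ) - 1)) * μ (ball 0 1)) := by gcongr
    _ = _ := by
        rw [ENNReal.ofReal_mul (by positivity), ENNReal.ofReal_pow zero_le_two,
          ENNReal.ofReal_ofNat]
        ring

theorem upperRegular_toSphere :
    ∃ C, UpperRegular μ.toSphere C ((Module.finrank ℝ E : ℝ) - 1) :=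
  ⟨(Module.finrank ℝ E * 2 ^ (Module.finrank ℝ E + 1) * μ (ball 0 1)).toNNReal,
    fun ω _ hρ => (toSphere_closedBall_le μ ω hρ).trans_eq <| by
      rw [ENNReal.coe_toNNReal (by finiteness)]⟩

end Sphere

theorem eigenfunction_continuous_general (N : ℕ) (s : ℝ) (hs0 : 0 < s)
    (hN : 2 * s < (N : ℝ)) (a : ℝ) (ha : a ≠ 0)
    (h : sphere (0 : EuclideanSpace ℝ (Fin (N + 1))) 1 → ℝ) (hm : Measurable h)
    (hb : ∃ M : ℝ, ∀ ω, |h ω| ≤ M)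
    (heq : ∀ᵐ ω ∂(volume : Measure (EuclideanSpace ℝ (Fin (N + 1)))).toSphere,
      a * h ω = ∫ η,
        ‖(ω : EuclideanSpace ℝ (Fin (N + 1))) - (η : EuclideanSpace ℝ (Fin (N + 1)))‖ ^
            (-((N : ℝ) - 2 * s)) * h η
        ∂(volume : Measure (EuclideanSpace ℝ (Fin (N + 1)))).toSphere) :
    ∃ g : C(sphere (0 : EuclideanSpace ℝ (Fin (N + 1))) 1, ℝ),
      h =ᵐ[(volume : Measure (EuclideanSpace ℝ (Fin (N + 1)))).toSphere] fun ω => g ω := by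
  obtain ⟨M, hM⟩ := hb
  obtain ⟨C, hC⟩ := upperRegular_toSphere (volume : Measure (EuclideanSpace ℝ (Fin (N + 1))))
  rw [finrank_euclideanSpace_fin, Nat.cast_add_one, add_sub_cancel_right] at hC
  have hcont := hC.continuous_rieszPotential (α := N - 2 * s) (by linarith) (by linarith)
    hm.aestronglyMeasurable hM
  refine ⟨⟨fun ω => a⁻¹ * rieszPotential _ (N - 2 * s) h ω, continuous_const.mul hcont⟩, ?_⟩
  filter_upwards [heq] with ω hω
  simp only [ContinuousMap.coe_mk, rieszPotential, Subtype.dist_eq, dist_eq_norm]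
  rw [← hω, inv_mul_cancel_left₀ ha]

/-- A bounded measurable solution of the eigenvalue integral equation
`a h(ω) = ∫_{S^N} |ω−η|^{−(N−2s)} h(η) dη` agrees a.e. with a continuous function. -/
theorem eigenfunction_continuous (N : ℕ) (hN1 : 1 ≤ N) (s : ℝ) (hs0 : 0 < s)
    (hs1 : s < 1) (hN : 2 * s < (N : ℝ)) (a : ℝ) (ha : a ≠ 0)
    (h : sphere (0 : EuclideanSpace ℝ (Fin (N + 1))) 1 → ℝ) (hm : Measurable h)
    (hb : ∃ M : ℝ, ∀ ω, |h ω| ≤ M)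
    (heq : ∀ᵐ ω ∂(volume : Measure (EuclideanSpace ℝ (Fin (N + 1)))).toSphere,
      a * h ω = ∫ η,
        ‖(ω : EuclideanSpace ℝ (Fin (N + 1))) - (η : EuclideanSpace ℝ (Fin (N + 1)))‖ ^
            (-((N : ℝ) - 2 * s)) * h η
        ∂(volume : Measure (EuclideanSpace ℝ (Fin (N + 1)))).toSphere) :
    ∃ g : C(sphere (0 : EuclideanSpace ℝ (Fin (N + 1))) 1, ℝ),
      h =ᵐ[(volume : Measure (EuclideanSpace ℝ (Fin (N + 1)))).toSphere] fun ω => g ω :=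
  eigenfunction_continuous_general N s hs0 hN a ha h hm hb heq
end
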